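/- arXiv:1210.1629 — 3 statements merged into one kernel-verified Lean document; each statement's English description precedes it below -/
import Mathlib

section
/- For every n ≥ 1, the kernel of θ_n : S̃_n → S_n is exactly {1, z}, the element z is central of order 2 in S̃_n (in particular z ≠ 1), and consequently the spin group S̃_n has order 2·n!. -/
/-!
The relations make `z` central with `z² = 1`, so `{1, z} ⊆ ker θ` and `|S̃ₙ| = n! · |ker θ|`;
it remains to show `z ≠ 1` and `|S̃ₙ| ≤ 2 · n!`.

For `z ≠ 1`, take the Clifford algebra of `ℚⁿ` with the quadratic form `x ↦ -½ ⟨x, x⟩`: the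
vectors `eᵢ - eᵢ₊₁` square to `-1`, adjacent ones satisfy `ab + ba = 1` (whence `(ab)³ = -1`)
and distant ones anticommute, so `tᵢ ↦ ι(eᵢ - eᵢ₊₁)`, `z ↦ -1` is a representation of `S̃ₙ`
in which `z` is not trivial.

For the bound, let `H ≤ S̃ₙ₊₁` be the image of `S̃ₙ` under `tᵢ ↦ tᵢ₊₁`. Using the braid and
commutation relations, the union of the cosets `H t₀ t₁ ⋯ t_{k-1}`, `k ≤ n`, is stable under right
multiplication by the generators, so it is all of `S̃ₙ₊₁` and `|S̃ₙ₊₁| ≤ (n + 1) |S̃ₙ|`.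
-/

/-- Defining relations of the spin group `S̃ₙ`: generators are `none` (the central
element `z`) and `some i` (the generator `tᵢ₊₁`, for `i : Fin (n-1)`, i.e. the 1-based
generators `t₁, …, t_{n-1}`).  Relations: `z² = 1`, `tᵢ² = z`, `(tᵢ tᵢ₊₁)³ = z`,
`tᵢ tⱼ = z tⱼ tᵢ` for `|i - j| > 1`, and `z tᵢ = tᵢ z`. -/
def spinRels (n : ℕ) : Set (FreeGroup (Option (Fin (n - 1)))) :=
  {r | r = FreeGroup.of none ^ 2} ∪
  {r | ∃ i : Fin (n - 1), r = FreeGroup.of (some i) ^ 2 * (FreeGroup.of none)⁻¹} ∪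
  {r | ∃ i j : Fin (n - 1), (j : ℕ) = (i : ℕ) + 1 ∧
      r = (FreeGroup.of (some i) * FreeGroup.of (some j)) ^ 3 * (FreeGroup.of none)⁻¹} ∪
  {r | ∃ i j : Fin (n - 1), 1 < |((i : ℕ) : ℤ) - ((j : ℕ) : ℤ)| ∧
      r = FreeGroup.of (some i) * FreeGroup.of (some j) *
        (FreeGroup.of none * FreeGroup.of (some j) * FreeGroup.of (some i))⁻¹} ∪
  {r | ∃ i : Fin (n - 1), r = FreeGroup.of none * FreeGroup.of (some i) *
      (FreeGroup.of (some i) * FreeGroup.of none)⁻¹}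

/-- The spin group `S̃ₙ`, presented by the generators and relations above. -/
abbrev SpinGroup (n : ℕ) : Type := PresentedGroup (spinRels n)

/-- The central element `z` of `S̃ₙ`. -/
def spinZ (n : ℕ) : SpinGroup n := PresentedGroup.of none

/-- The generator `tᵢ₊₁` of `S̃ₙ` (1-based: `t₁, …, t_{n-1}`), for `i : Fin (n-1)`. -/
def spinT (n : ℕ) (i : Fin (n - 1)) : SpinGroup n := PresentedGroup.of (some i)

/-- The element `i` of `{1, …, n}` (0-based), i.e. the first point moved by the
transposition `(i, i+1)` corresponding to the generator `tᵢ`. -/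
def finL {n : ℕ} (i : Fin (n - 1)) : Fin n := ⟨i.val, by have := i.isLt; omega⟩

/-- The element `i+1` of `{1, …, n}` (0-based). -/
def finR {n : ℕ} (i : Fin (n - 1)) : Fin n := ⟨i.val + 1, by have := i.isLt; omega⟩

open scoped Pointwise

theorem Subgroup.coe_mul_eq_univ_of_closure_eq_top {G : Type*} [Group G] (H : Subgroup G)
    {S R : Set G} (hS : Subgroup.closure S = ⊤) (hR : 1 ∈ R)
    (hmul : ∀ r ∈ R, ∀ s ∈ S, r * s ∈ (H : Set G) * R)
    (hinv : ∀ r ∈ R, ∀ s ∈ S, r * s⁻¹ ∈ (H : Set G) * R) :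
    (H : Set G) * R = Set.univ := by
  have right_mul_mem {a : G} (ha : ∀ r ∈ R, r * a ∈ (H : Set G) * R) :
      ∀ x ∈ (H : Set G) * R, x * a ∈ (H : Set G) * R := by
    rintro _ ⟨h, hh, r, hr, rfl⟩
    obtain ⟨h', hh', r', hr', hra⟩ := ha r hr
    exact ⟨h * h', H.mul_mem hh hh', r', hr', by simp only [mul_assoc, ← hra]⟩
  have key (g : G) : ∀ x ∈ (H : Set G) * R, x * g ∈ (H : Set G) * R := by
    induction (hS ▸ Subgroup.mem_top g : g ∈ Subgroup.closure S)
      using Subgroup.closure_induction'' with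
    | mem s hs => exact right_mul_mem fun r hr => hmul r hr s hs
    | inv_mem s hs => exact right_mul_mem fun r hr => hinv r hr s hs
    | one => simp
    | mul x y _ _ hx hy => exact fun w hw => mul_assoc w x y ▸ hy _ (hx w hw)
  exact Set.eq_univ_of_forall fun g => by
    simpa using key g 1 ⟨1, H.one_mem, 1, hR, one_mul 1⟩

theorem Set.natCard_le_of_mul_eq_univ {M : Type*} [Mul M] [IsCancelMul M] {s t : Set M}
    (h : s * t = Set.univ) : Nat.card M ≤ Nat.card s * Nat.card t := by
  rw [← Nat.card_univ, ← h]
  exact Set.natCard_mul_le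

theorem mul_pow_three_eq_neg_one {R : Type*} [Ring R] {a b : R} (ha : a * a = -1)
    (hb : b * b = -1) (hab : a * b + b * a = 1) : (a * b) ^ 3 = -1 := by
  have hsq : (a * b) ^ 2 = a * b - 1 :=
    calc (a * b) ^ 2 = a * (b * a) * b := by noncomm_ring
      _ = a * b - a * a * (b * b) := by rw [eq_sub_of_add_eq' hab]; noncomm_ring
      _ = a * b - 1 := by rw [ha, hb]; noncomm_ring
  calc (a * b) ^ 3 = (a * b) ^ 2 * (a * b) := pow_succ _ _
    _ = -1 := by rw [hsq, sub_mul, ← sq, hsq]; noncomm_ring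

def Units.ofMulSelfEqNegOne {R : Type*} [Ring R] {a : R} (ha : a * a = -1) : Rˣ where
  val := a
  inv := -a
  val_inv := by rw [mul_neg, ha, neg_neg]
  inv_val := by rw [neg_mul, ha, neg_neg]

theorem mem_zpowers_iff_of_orderOf_eq_two {G : Type*} [Group G] {z x : G} (hz : orderOf z = 2) :
    x ∈ Subgroup.zpowers z ↔ x = 1 ∨ x = z := by
  classical
  rw [(orderOf_pos_iff.mp (hz ▸ two_pos)).mem_zpowers_iff_mem_range_orderOf, hz]
  simp [Finset.range_add_one, eq_comm, or_comm]

theorem MonoidHom.card_eq_card_mul_card_ker {G P : Type*} [Group G] [Group P] (θ : G →* P)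
    (hθ : Function.Surjective θ) : Nat.card G = Nat.card P * Nat.card θ.ker := by
  rw [θ.ker.card_eq_card_quotient_mul_card_subgroup,
    Nat.card_congr (QuotientGroup.quotientKerEquivOfSurjective θ hθ).toEquiv]

theorem MonoidHom.ker_eq_zpowers_of_card_le {G P : Type*} [Group G] [Group P] [Finite G]
    (θ : G →* P) (hθ : Function.Surjective θ) {z : G} (hz : θ z = 1) (hord : orderOf z = 2)
    (hcard : Nat.card G ≤ 2 * Nat.card P) : θ.ker = Subgroup.zpowers z := by
  have : Finite P := Finite.of_surjective θ hθ
  refine (Subgroup.eq_of_le_of_card_ge (Subgroup.zpowers_le.mpr hz) ?_).symm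
  rw [Nat.card_zpowers, hord]
  rw [θ.card_eq_card_mul_card_ker hθ, mul_comm 2] at hcard
  exact Nat.le_of_mul_le_mul_left hcard Nat.card_pos

namespace SpinGroup

variable {n : ℕ}

section Lift

variable {G : Type*} [Group G]

structure IsSpinFamily (ζ : G) (τ : Fin (n - 1) → G) : Prop where
  sq_eq_one : ζ ^ 2 = 1
  sq : ∀ i, τ i ^ 2 = ζ
  braid : ∀ i j : Fin (n - 1), (j : ℕ) = i + 1 → (τ i * τ j) ^ 3 = ζ
  anticomm : ∀ i j : Fin (n - 1), 1 < |((i : ℕ) : ℤ) - ((j : ℕ) : ℤ)| →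
    τ i * τ j = ζ * (τ j * τ i)
  central : ∀ i, ζ * τ i = τ i * ζ

variable {ζ : G} {τ : Fin (n - 1) → G}

theorem IsSpinFamily.lift_rels (h : IsSpinFamily ζ τ) :
    ∀ r ∈ spinRels n, FreeGroup.lift (fun x => x.elim ζ τ) r = 1 := by
  rintro r (((( rfl | ⟨i, rfl⟩) | ⟨i, j, hij, rfl⟩) | ⟨i, j, hij, rfl⟩) | ⟨i, rfl⟩) <;>
    simp only [map_mul, map_pow, map_inv, FreeGroup.lift_apply_of, Option.elim, mul_inv_eq_one]
  exacts [h.sq_eq_one, h.sq i, h.braid i j hij, (h.anticomm i j hij).trans (mul_assoc ..).symm,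
    h.central i]

def lift (h : IsSpinFamily ζ τ) : SpinGroup n →* G := PresentedGroup.toGroup h.lift_rels

@[simp] theorem lift_spinZ (h : IsSpinFamily ζ τ) : lift h (spinZ n) = ζ :=
  PresentedGroup.toGroup.of h.lift_rels

@[simp] theorem lift_spinT (h : IsSpinFamily ζ τ) (i : Fin (n - 1)) :
    lift h (spinT n i) = τ i :=
  PresentedGroup.toGroup.of h.lift_rels

end Lift

theorem isSpinFamily : IsSpinFamily (spinZ n) (spinT n) := by
  have h {r} (hr : r ∈ spinRels n) : PresentedGroup.mk (spinRels n) r = 1 :=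
    (QuotientGroup.eq_one_iff r).mpr (Subgroup.subset_normalClosure hr)
  refine ⟨?_, fun i => ?_, fun i j hij => ?_, fun i j hij => ?_, fun i => ?_⟩
  · have := h (Or.inl (Or.inl (Or.inl (Or.inl rfl))))
    rwa [map_pow] at this
  · have := h (Or.inl (Or.inl (Or.inl (Or.inr ⟨i, rfl⟩))))
    rwa [map_mul, map_inv, map_pow, mul_inv_eq_one] at this
  · have := h (Or.inl (Or.inl (Or.inr ⟨i, j, hij, rfl⟩)))
    rwa [map_mul, map_inv, map_pow, map_mul, mul_inv_eq_one] at this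
  · have := h (Or.inl (Or.inr ⟨i, j, hij, rfl⟩))
    rw [map_mul, map_inv, map_mul, map_mul, map_mul, mul_inv_eq_one] at this
    exact this.trans (mul_assoc ..)
  · have := h (Or.inr ⟨i, rfl⟩)
    rwa [map_mul, map_inv, map_mul, map_mul, mul_inv_eq_one] at this

theorem spinZ_sq : spinZ n ^ 2 = 1 := isSpinFamily.sq_eq_one

theorem spinT_sq (i : Fin (n - 1)) : spinT n i ^ 2 = spinZ n := isSpinFamily.sq i

theorem spinZ_mem_center : spinZ n ∈ Subgroup.center (SpinGroup n) := by
  rw [← SetLike.mem_coe, ← Set.singleton_subset_iff, ← Subgroup.centralizer_eq_top_iff_subset,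
    eq_top_iff, ← PresentedGroup.closure_range_of, Subgroup.closure_le]
  rintro _ ⟨_ | i, rfl⟩ <;> rw [SetLike.mem_coe, Subgroup.mem_centralizer_singleton_iff]
  exacts [rfl, (isSpinFamily.central i).symm]

theorem mul_spinZ (g : SpinGroup n) : g * spinZ n = spinZ n * g :=
  Subgroup.mem_center_iff.mp spinZ_mem_center g

theorem mul_spinZ_mul (g h : SpinGroup n) : g * (spinZ n * h) = spinZ n * (g * h) := by
  rw [← mul_assoc, mul_spinZ, mul_assoc]

theorem spinZ_mul_spinZ_mul (g : SpinGroup n) : spinZ n * (spinZ n * g) = g := by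
  rw [← mul_assoc, ← sq, spinZ_sq, one_mul]

theorem spinZ_inv : (spinZ n)⁻¹ = spinZ n :=
  inv_eq_of_mul_eq_one_right (by rw [← sq, spinZ_sq])

theorem spinT_inv (i : Fin (n - 1)) : (spinT n i)⁻¹ = spinZ n * spinT n i :=
  inv_eq_of_mul_eq_one_right (by rw [mul_spinZ_mul, ← sq, spinT_sq, ← sq, spinZ_sq])

theorem spinT_braid {i j : Fin (n - 1)} (hij : (j : ℕ) = i + 1) :
    spinT n i * spinT n j * spinT n i = spinT n j * spinT n i * spinT n j := by
  have h : spinT n i * spinT n j * spinT n i * (spinT n j * spinT n i * spinT n j) = spinZ n := by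
    rw [← isSpinFamily.braid i j hij, pow_three]; simp only [mul_assoc]
  rw [eq_mul_inv_of_mul_eq h]
  simp only [mul_inv_rev, spinT_inv, mul_assoc, mul_spinZ_mul, spinZ_mul_spinZ_mul]

noncomputable def negHalfDotForm (n : ℕ) : QuadraticForm ℚ (Fin n → ℚ) :=
  LinearMap.BilinMap.toQuadraticMap (-(2⁻¹ : ℚ) • dotProductBilin ℚ ℚ)

theorem negHalfDotForm_apply (x : Fin n → ℚ) : negHalfDotForm n x = -(2⁻¹ * (x ⬝ᵥ x)) := by
  simp [negHalfDotForm]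

theorem polar_negHalfDotForm (x y : Fin n → ℚ) :
    QuadraticMap.polar (negHalfDotForm n) x y = -(x ⬝ᵥ y) := by
  rw [negHalfDotForm, LinearMap.BilinMap.polar_toQuadraticMap]
  simp [dotProduct_comm y x]
  ring

def root (i : Fin (n - 1)) : Fin n → ℚ := Pi.single (finL i) 1 - Pi.single (finR i) 1

theorem root_dotProduct_root (i j : Fin (n - 1)) :
    root i ⬝ᵥ root j =
      if (i : ℕ) = j then 2 else if (i : ℕ) + 1 = j ∨ (j : ℕ) + 1 = i then -1 else 0 := by
  simp only [root, finL, finR, sub_dotProduct, dotProduct_sub, single_dotProduct,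
    Pi.single_apply, Fin.ext_iff]
  split_ifs <;> (try norm_num) <;> omega

section Clifford

open CliffordAlgebra

theorem ι_root_mul_self (i : Fin (n - 1)) :
    ι (negHalfDotForm n) (root i) * ι (negHalfDotForm n) (root i) = -1 := by
  rw [ι_sq_scalar, negHalfDotForm_apply, root_dotProduct_root, if_pos rfl]
  norm_num

noncomputable def cliffordUnit (i : Fin (n - 1)) : (CliffordAlgebra (negHalfDotForm n))ˣ :=
  Units.ofMulSelfEqNegOne (ι_root_mul_self i)

theorem isSpinFamily_cliffordUnit : IsSpinFamily (-1) (cliffordUnit (n := n)) := by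
  refine ⟨by simp, fun i => ?_, fun i j hij => ?_, fun i j hij => ?_, fun i => ?_⟩ <;>
    ext <;> simp only [cliffordUnit, Units.ofMulSelfEqNegOne, Units.val_pow_eq_pow_val,
      Units.val_mul, Units.val_neg, Units.val_one]
  · rw [sq, ι_root_mul_self]
  · refine mul_pow_three_eq_neg_one (ι_root_mul_self i) (ι_root_mul_self j) ?_
    rw [ι_mul_ι_add_swap, polar_negHalfDotForm, root_dotProduct_root, if_neg (by omega),
      if_pos (by omega)]
    simp
  · have := lt_abs.mp hij
    rw [ι_mul_ι_comm, polar_negHalfDotForm, root_dotProduct_root, if_neg (by omega),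
      if_neg (by omega)]
    simp
  · simp

theorem spinZ_ne_one : spinZ n ≠ 1 := fun h => by
  have h' := congrArg (fun g => (lift isSpinFamily_cliffordUnit g).val) h
  have : algebraMap ℚ (CliffordAlgebra (negHalfDotForm n)) (-1) = algebraMap ℚ _ 1 := by
    simpa using h'
  exact absurd ((algebraMap ℚ _).injective this) (by norm_num)

end Clifford

/-- The generator `t_m` of `S̃ₙ₊₁` indexed by `m : ℕ`, extended by `1` for `m ≥ n`. -/
def gen (m : ℕ) : SpinGroup (n + 1) := if h : m < n then spinT (n + 1) ⟨m, by omega⟩ else 1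

theorem spinT_eq_gen (i : Fin (n + 1 - 1)) : spinT (n + 1) i = gen i := by
  rw [gen, dif_pos (by omega)]

theorem gen_sq {m : ℕ} (hm : m < n) : gen m ^ 2 = spinZ (n + 1) := by
  rw [gen, dif_pos hm, spinT_sq]

theorem gen_mul_gen_of_lt {i j : ℕ} (hij : i + 1 < j) (hj : j < n) :
    gen i * gen j = spinZ (n + 1) * (gen j * gen i) := by
  rw [gen, gen, dif_pos (by omega), dif_pos hj]
  exact isSpinFamily.anticomm _ _ (by rw [lt_abs]; push_cast; omega)

theorem gen_mul_gen_of_gt {i j : ℕ} (hij : j + 1 < i) (hi : i < n) :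
    gen i * gen j = spinZ (n + 1) * (gen j * gen i) := by
  rw [gen_mul_gen_of_lt hij hi, spinZ_mul_spinZ_mul]

theorem gen_braid {m : ℕ} (hm : m + 1 < n) :
    (gen m * gen (m + 1) * gen m : SpinGroup (n + 1)) = gen (m + 1) * gen m * gen (m + 1) := by
  rw [gen, gen, dif_pos (by omega), dif_pos hm]
  exact spinT_braid rfl

def genProd : ℕ → SpinGroup (n + 1)
  | 0 => 1
  | k + 1 => genProd k * gen k

theorem genProd_mul_gen_of_lt {k j : ℕ} (hkj : k < j) (hj : j < n) :
    genProd k * gen j = spinZ (n + 1) ^ k * (gen j * genProd k) := by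
  induction k with
  | zero => simp [genProd]
  | succ k ih =>
    calc genProd (k + 1) * gen j = genProd k * (gen k * gen j) := by rw [genProd, mul_assoc]
      _ = spinZ (n + 1) * (genProd k * gen j * gen k) := by
        rw [gen_mul_gen_of_lt (by omega) hj]; simp only [mul_assoc, mul_spinZ_mul]
      _ = spinZ (n + 1) ^ (k + 1) * (gen j * genProd (k + 1)) := by
        rw [ih (by omega), genProd, pow_succ']; simp only [mul_assoc]

theorem genProd_mul_gen_of_gt {m k : ℕ} (hmk : m + 2 ≤ k) (hk : k ≤ n) :
    genProd k * gen m = spinZ (n + 1) ^ (k - 2) * (gen (m + 1) * genProd k) := by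
  induction k, hmk using Nat.le_induction with
  | base =>
    calc genProd (m + 2) * gen m = genProd m * (gen m * gen (m + 1) * gen m) := by
          simp only [genProd, mul_assoc]
      _ = genProd m * gen (m + 1) * (gen m * gen (m + 1)) := by
          rw [gen_braid (by omega)]; simp only [mul_assoc]
      _ = spinZ (n + 1) ^ m * (gen (m + 1) * genProd (m + 2)) := by
          rw [genProd_mul_gen_of_lt (by omega) (by omega)]; simp only [genProd, mul_assoc]
  | succ k hmk ih =>
    calc genProd (k + 1) * gen m = genProd k * (gen k * gen m) := by rw [genProd, mul_assoc]
      _ = spinZ (n + 1) * (genProd k * gen m * gen k) := by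
        rw [gen_mul_gen_of_gt (by omega) (by omega)]; simp only [mul_assoc, mul_spinZ_mul]
      _ = spinZ (n + 1) ^ (k + 1 - 2) * (gen (m + 1) * genProd (k + 1)) := by
        rw [ih (by omega), genProd, show k + 1 - 2 = k - 2 + 1 by omega, pow_succ']
        simp only [mul_assoc]

theorem isSpinFamily_shift :
    IsSpinFamily (spinZ (n + 1)) fun i : Fin (n - 1) => spinT (n + 1) ⟨i + 1, by omega⟩ where
  sq_eq_one := spinZ_sq
  sq _ := spinT_sq _
  braid _ _ hij := isSpinFamily.braid _ _ (by simp [hij])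
  anticomm _ _ hij := isSpinFamily.anticomm _ _ (by simpa using hij)
  central _ := isSpinFamily.central _

def shiftHom (n : ℕ) : SpinGroup n →* SpinGroup (n + 1) := lift isSpinFamily_shift

theorem gen_mem_range_shiftHom {m : ℕ} (hm : 0 < m) : gen m ∈ (shiftHom n).range := by
  by_cases hmn : m < n
  · refine ⟨spinT n ⟨m - 1, by omega⟩, ?_⟩
    rw [shiftHom, lift_spinT, spinT_eq_gen]
    exact congrArg gen (Nat.sub_add_cancel hm)
  · rw [gen, dif_neg hmn]
    exact one_mem _

theorem spinZ_mem_range_shiftHom : spinZ (n + 1) ∈ (shiftHom n).range :=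
  ⟨spinZ n, lift_spinZ _⟩

def cosetsUnion (n : ℕ) : Set (SpinGroup (n + 1)) :=
  ((shiftHom n).range : Set (SpinGroup (n + 1))) * Set.range fun k : Fin (n + 1) => genProd k

theorem mul_genProd_mem_cosetsUnion {h : SpinGroup (n + 1)} (hh : h ∈ (shiftHom n).range)
    {k : ℕ} (hk : k ≤ n) : h * genProd k ∈ cosetsUnion n :=
  ⟨h, hh, genProd k, ⟨⟨k, by omega⟩, rfl⟩, rfl⟩

theorem mul_mem_cosetsUnion {h x : SpinGroup (n + 1)} (hh : h ∈ (shiftHom n).range)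
    (hx : x ∈ cosetsUnion n) : h * x ∈ cosetsUnion n := by
  obtain ⟨h', hh', _, ⟨k, rfl⟩, rfl⟩ := hx
  simpa only [mul_assoc] using
    mul_genProd_mem_cosetsUnion (mul_mem hh hh') (Nat.lt_succ_iff.mp k.2)

theorem genProd_mul_gen_mem_cosetsUnion {k m : ℕ} (hk : k ≤ n) (hm : m < n) :
    genProd k * gen m ∈ cosetsUnion n := by
  have hz := spinZ_mem_range_shiftHom (n := n)
  obtain rfl | rfl | hkm | hmk : m = k ∨ m + 1 = k ∨ k < m ∨ m + 2 ≤ k := by omega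
  · simpa [genProd] using mul_genProd_mem_cosetsUnion (one_mem _) (k := m + 1) hm
  · rw [genProd, mul_assoc, ← sq, gen_sq hm, mul_spinZ]
    exact mul_genProd_mem_cosetsUnion hz (by omega)
  · rw [genProd_mul_gen_of_lt hkm hm, ← mul_assoc]
    exact mul_genProd_mem_cosetsUnion
      (mul_mem (pow_mem hz k) (gen_mem_range_shiftHom (by omega))) hk
  · rw [genProd_mul_gen_of_gt hmk hk, ← mul_assoc]
    exact mul_genProd_mem_cosetsUnion
      (mul_mem (pow_mem hz _) (gen_mem_range_shiftHom (by omega))) hk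

theorem cosetsUnion_eq_univ : cosetsUnion n = Set.univ := by
  have hz := spinZ_mem_range_shiftHom (n := n)
  have hmul : ∀ r ∈ Set.range fun k : Fin (n + 1) => genProd k,
      ∀ s ∈ Set.range (PresentedGroup.of (rels := spinRels (n + 1))), r * s ∈ cosetsUnion n := by
    rintro _ ⟨k, rfl⟩ _ ⟨_ | i, rfl⟩
    · exact mul_spinZ _ ▸ mul_genProd_mem_cosetsUnion hz (Nat.lt_succ_iff.mp k.2)
    · rw [show PresentedGroup.of (some i) = gen i from spinT_eq_gen i]
      exact genProd_mul_gen_mem_cosetsUnion (Nat.lt_succ_iff.mp k.2) (by omega)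
  refine (shiftHom n).range.coe_mul_eq_univ_of_closure_eq_top
    (PresentedGroup.closure_range_of _) ⟨0, rfl⟩ hmul ?_
  rintro r hr _ ⟨_ | i, rfl⟩
  · exact spinZ_inv ▸ hmul r hr _ ⟨none, rfl⟩
  · rw [show (PresentedGroup.of (some i))⁻¹ = spinZ (n + 1) * spinT (n + 1) i from spinT_inv i,
      mul_spinZ_mul]
    exact mul_mem_cosetsUnion hz (hmul r hr _ ⟨some i, rfl⟩)

theorem pair_one_spinZ_eq_univ : ({1, spinZ 0} : Set (SpinGroup 0)) = Set.univ := by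
  have hmul : ∀ r ∈ ({1, spinZ 0} : Set (SpinGroup 0)), r * spinZ 0 ∈ ({1, spinZ 0} : Set _) := by
    rintro _ (rfl | rfl)
    exacts [Or.inr (one_mul _), Or.inl (by rw [← sq, spinZ_sq])]
  have h := (⊥ : Subgroup (SpinGroup 0)).coe_mul_eq_univ_of_closure_eq_top
    (PresentedGroup.closure_range_of _) (R := {1, spinZ 0}) (Or.inl rfl)
  simp only [Subgroup.coe_bot, Set.singleton_one, one_mul] at h
  refine h ?_ ?_ <;> rintro r hr _ ⟨_ | i, rfl⟩
  · exact hmul r hr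
  · exact i.elim0
  · exact spinZ_inv ▸ hmul r hr
  · exact i.elim0

instance instFinite : ∀ n, Finite (SpinGroup n)
  | 0 => Set.finite_univ_iff.mp (pair_one_spinZ_eq_univ ▸ Set.toFinite _)
  | n + 1 => by
    have := instFinite n
    rw [← Set.finite_univ_iff, ← cosetsUnion_eq_univ, cosetsUnion, MonoidHom.coe_range]
    exact (Set.finite_range _).mul (Set.finite_range _)

theorem card_le_two_mul_factorial : ∀ n, Nat.card (SpinGroup n) ≤ 2 * n.factorial
  | 0 => by
    rw [← Nat.card_univ, ← pair_one_spinZ_eq_univ, Nat.card_coe_set_eq]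
    exact (Set.ncard_insert_le _ _).trans (by simp)
  | n + 1 => by
    have h := cosetsUnion_eq_univ (n := n)
    rw [cosetsUnion, MonoidHom.coe_range] at h
    calc Nat.card (SpinGroup (n + 1))
        ≤ Nat.card (Set.range (shiftHom n)) *
            Nat.card (Set.range fun k : Fin (n + 1) => genProd k) :=
          Set.natCard_le_of_mul_eq_univ h
      _ ≤ 2 * n.factorial * (n + 1) := by
          gcongr
          · exact (Finite.card_range_le _).trans (card_le_two_mul_factorial n)
          · exact (Finite.card_range_le _).trans (Nat.card_fin _).le
      _ = 2 * (n + 1).factorial := by rw [Nat.factorial_succ]; ring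

end SpinGroup

theorem spin_cover_kernel_center_card_general (n : ℕ)
    (θ : SpinGroup n →* Equiv.Perm (Fin n))
    (hZ : θ (spinZ n) = 1)
    (hsurj : Function.Surjective θ) :
    (∀ x : SpinGroup n, θ x = 1 ↔ x = 1 ∨ x = spinZ n) ∧
    spinZ n ∈ Subgroup.center (SpinGroup n) ∧
    orderOf (spinZ n) = 2 ∧
    spinZ n ≠ 1 ∧
    Nat.card (SpinGroup n) = 2 * Nat.factorial n := by
  have hperm : Nat.card (Equiv.Perm (Fin n)) = n.factorial := by rw [Nat.card_perm, Nat.card_fin]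
  have hord : orderOf (spinZ n) = 2 :=
    orderOf_eq_prime SpinGroup.spinZ_sq SpinGroup.spinZ_ne_one
  have hker : θ.ker = Subgroup.zpowers (spinZ n) :=
    θ.ker_eq_zpowers_of_card_le hsurj hZ hord (hperm ▸ SpinGroup.card_le_two_mul_factorial n)
  refine ⟨fun x => ?_, SpinGroup.spinZ_mem_center, hord, SpinGroup.spinZ_ne_one, ?_⟩
  · rw [← MonoidHom.mem_ker, hker, mem_zpowers_iff_of_orderOf_eq_two hord]
  · rw [θ.card_eq_card_mul_card_ker hsurj, hker, Nat.card_zpowers, hord, hperm, mul_comm]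

/-- The kernel of `θₙ : S̃ₙ → Sₙ` is exactly `{1, z}`, the element `z` is central
of order 2 in `S̃ₙ` (in particular `z ≠ 1`), and consequently `|S̃ₙ| = 2·n!`. -/
theorem spin_cover_kernel_center_card (n : ℕ) (hn : 1 ≤ n)
    (θ : SpinGroup n →* Equiv.Perm (Fin n))
    (hT : ∀ i : Fin (n - 1), θ (spinT n i) = Equiv.swap (finL i) (finR i))
    (hZ : θ (spinZ n) = 1)
    (hsurj : Function.Surjective θ) :
    (∀ x : SpinGroup n, θ x = 1 ↔ x = 1 ∨ x = spinZ n) ∧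
    spinZ n ∈ Subgroup.center (SpinGroup n) ∧
    orderOf (spinZ n) = 2 ∧
    spinZ n ≠ 1 ∧
    Nat.card (SpinGroup n) = 2 * Nat.factorial n :=
  spin_cover_kernel_center_card_general n θ hZ hsurj
end

section
/- Let f : G̃ → G be a surjective homomorphism of finite groups whose kernel is {1, z}, where z is a central element of G̃ with z ≠ 1. For every x̃ ∈ G̃: if x̃ is conjugate to z·x̃ in G̃, then the centralizer of x̃ in G̃ has the same order as the centralizer of f(x̃) in G; if x̃ is not conjugate to z·x̃, then the centralizer of x̃ in G̃ has order 2·|C_G(f(x̃))|. -/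
/-!
Let `H = f⁻¹(C_G(f x))`, a subgroup of order `|C_G(f x)| · |ker f|`. An element `g ∈ H` satisfies
`⁅g, x⁆ ∈ ker f`, and since `ker f` is central, `g ↦ ⁅g, x⁆` is a homomorphism on `H` with kernel
`C(x)` and image `{k ∈ ker f | x ~ k x}`. Hence
`|C(x)| · |{k ∈ ker f | x ~ k x}| = |C_G(f x)| · |ker f|`; for `ker f = {1, z}` the image is
`{1, z}` or `{1}` according as `x ~ z x` or not.
-/

open Subgroup
open scoped commutatorElement

namespace MonoidHom

variable {G N : Type*} [Group G] [Group N]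

theorem card_eq_card_range_mul_card_ker (φ : G →* N) :
    Nat.card G = Nat.card φ.range * Nat.card φ.ker := by
  rw [φ.ker.card_eq_card_quotient_mul_card_subgroup,
    Nat.card_congr (QuotientGroup.quotientKerEquivRange φ).toEquiv]

theorem card_comap_of_surjective (f : G →* N) (hf : Function.Surjective f) (S : Subgroup N) :
    Nat.card (S.comap f) = Nat.card S * Nat.card f.ker := by
  rw [card_eq_card_range_mul_card_ker (f.domRestrict (S.comap f)), domRestrict_range,
    map_comap_eq_self_of_surjective hf, ker_domRestrict,
    Nat.card_congr (subgroupOfEquivOfLe (ker_le_comap f S)).toEquiv]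

theorem mem_comap_centralizer_iff_commutatorElement_mem_ker (f : G →* N) {x g : G} :
    g ∈ (centralizer {f x}).comap f ↔ ⁅g, x⁆ ∈ f.ker := by
  rw [mem_comap, mem_centralizer_singleton_iff, mem_ker, map_commutatorElement,
    commutatorElement_eq_one_iff_mul_comm]

end MonoidHom

section CentralCommutator

variable {G : Type*} [Group G]

def centralCommutatorHom (x : G) (H : Subgroup G) (hH : ∀ g ∈ H, ⁅g, x⁆ ∈ center G) :
    H →* G where
  toFun g := ⁅(g : G), x⁆
  map_one' := by simp
  map_mul' a b := by
    have hb := mem_center_iff.mp (hH b b.2)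
    calc ⁅((a * b : H) : G), x⁆ = a * ⁅(b : G), x⁆ * x * (a : G)⁻¹ * x⁻¹ := by
          simp only [coe_mul, commutatorElement_def]; group
      _ = ⁅(a : G), x⁆ * ⁅(b : G), x⁆ := by
          rw [hb, hb ⁅(a : G), x⁆, commutatorElement_def (a : G)]; simp only [mul_assoc]

variable {x : G} {H : Subgroup G} {hH : ∀ g ∈ H, ⁅g, x⁆ ∈ center G}

theorem centralCommutatorHom_apply (g : H) : centralCommutatorHom x H hH g = ⁅(g : G), x⁆ := rfl

theorem ker_centralCommutatorHom :
    (centralCommutatorHom x H hH).ker = (centralizer {x}).subgroupOf H := by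
  ext g
  rw [MonoidHom.mem_ker, mem_subgroupOf, centralCommutatorHom_apply,
    commutatorElement_eq_one_iff_mul_comm, mem_centralizer_singleton_iff, eq_comm]

end CentralCommutator

section CentralExtension

variable {G' G : Type*} [Group G'] [Group G] (f : G' →* G)

theorem centralizer_le_comap_centralizer (x : G') :
    centralizer {x} ≤ (centralizer {f x}).comap f := fun g hg => by
  rw [f.mem_comap_centralizer_iff_commutatorElement_mem_ker,
    commutatorElement_eq_one_iff_mul_comm.mpr (mem_centralizer_singleton_iff.mp hg)]
  exact one_mem _

variable {f}

theorem mem_range_centralCommutatorHom_comap_centralizer_iff (hcen : f.ker ≤ center G')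
    (x k : G') :
    k ∈ (centralCommutatorHom x ((centralizer {f x}).comap f)
      fun _ hg => hcen (f.mem_comap_centralizer_iff_commutatorElement_mem_ker.mp hg)).range ↔
      k ∈ f.ker ∧ IsConj x (k * x) := by
  constructor
  · rintro ⟨g, rfl⟩
    refine ⟨f.mem_comap_centralizer_iff_commutatorElement_mem_ker.mp g.2, isConj_iff.mpr ⟨g, ?_⟩⟩
    rw [centralCommutatorHom_apply, commutatorElement_def]
    group
  · rintro ⟨hk, hconj⟩
    obtain ⟨c, hc⟩ := isConj_iff.mp hconj
    have hck : ⁅c, x⁆ = k := by rw [commutatorElement_def, hc]; group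
    exact ⟨⟨c, f.mem_comap_centralizer_iff_commutatorElement_mem_ker.mpr (hck ▸ hk)⟩, hck⟩

theorem card_centralizer_mul_card_setOf_mem_ker_isConj_mul (hf : Function.Surjective f)
    (hcen : f.ker ≤ center G') (x : G') :
    Nat.card (centralizer {x}) * Nat.card {k | k ∈ f.ker ∧ IsConj x (k * x)} =
      Nat.card (centralizer {f x}) * Nat.card f.ker := by
  set ψ := centralCommutatorHom x ((centralizer {f x}).comap f)
    fun _ hg => hcen (f.mem_comap_centralizer_iff_commutatorElement_mem_ker.mp hg)
  have hker : Nat.card ψ.ker = Nat.card (centralizer {x}) := by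
    rw [ker_centralCommutatorHom]
    exact Nat.card_congr (subgroupOfEquivOfLe (centralizer_le_comap_centralizer f x)).toEquiv
  have hrange : Nat.card ψ.range = Nat.card {k | k ∈ f.ker ∧ IsConj x (k * x)} :=
    Nat.card_congr <| Equiv.setCongr <| Set.ext <|
      mem_range_centralCommutatorHom_comap_centralizer_iff hcen x
  rw [← hker, ← hrange, mul_comm, ← ψ.card_eq_card_range_mul_card_ker,
    f.card_comap_of_surjective hf]

theorem card_setOf_mem_ker_isConj_mul_eq_two {z : G'} (hz1 : z ≠ 1)
    (hker : (f.ker : Set G') = {1, z}) {x : G'} (hconj : IsConj x (z * x)) :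
    Nat.card {k | k ∈ f.ker ∧ IsConj x (k * x)} = 2 := by
  have hset : {k | k ∈ f.ker ∧ IsConj x (k * x)} = {1, z} := by
    rw [← hker]
    refine Set.ext fun k => ⟨And.left, fun hk => ⟨hk, ?_⟩⟩
    rcases (hker ▸ hk : k ∈ ({1, z} : Set G')) with rfl | rfl
    exacts [by rw [one_mul], hconj]
  rw [hset, Nat.card_coe_set_eq, Set.ncard_pair hz1.symm]

theorem card_setOf_mem_ker_isConj_mul_eq_one {z : G'} (hker : (f.ker : Set G') = {1, z})
    {x : G'} (hsplit : ¬ IsConj x (z * x)) :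
    Nat.card {k | k ∈ f.ker ∧ IsConj x (k * x)} = 1 := by
  have hset : {k | k ∈ f.ker ∧ IsConj x (k * x)} = {1} := by
    refine Set.ext fun k => ⟨fun ⟨hk, hk_conj⟩ => ?_, fun hk => ⟨?_, ?_⟩⟩
    · rcases (hker ▸ hk : k ∈ ({1, z} : Set G')) with rfl | rfl
      exacts [rfl, absurd hk_conj hsplit]
    · rw [hk]; exact one_mem _
    · rw [hk, one_mul]
  rw [hset, Nat.card_coe_set_eq, Set.ncard_singleton]

end CentralExtension

theorem centralizer_card_of_double_cover_general (G' G : Type) [Group G'] [Group G]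
    (f : G' →* G) (hf : Function.Surjective f)
    (z : G') (hz1 : z ≠ 1) (hzc : z ∈ Subgroup.center G')
    (hker : ∀ y : G', f y = 1 ↔ y = 1 ∨ y = z) (x : G') :
    (IsConj x (z * x) →
      Nat.card (Subgroup.centralizer {x} : Subgroup G') =
        Nat.card (Subgroup.centralizer {f x} : Subgroup G)) ∧
    (¬ IsConj x (z * x) →
      Nat.card (Subgroup.centralizer {x} : Subgroup G') =
        2 * Nat.card (Subgroup.centralizer {f x} : Subgroup G)) := by
  have hker_eq : (f.ker : Set G') = {1, z} := Set.ext hker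
  have hcen : f.ker ≤ center G' := fun y hy => by
    rcases (hker y).mp hy with rfl | rfl
    exacts [one_mem _, hzc]
  have hker_card : Nat.card f.ker = 2 := by
    rw [← SetLike.coe_sort_coe, hker_eq, Nat.card_coe_set_eq, Set.ncard_pair hz1.symm]
  have hcard := card_centralizer_mul_card_setOf_mem_ker_isConj_mul hf hcen x
  refine ⟨fun hconj => ?_, fun hsplit => ?_⟩
  · rw [card_setOf_mem_ker_isConj_mul_eq_two hz1 hker_eq hconj, hker_card] at hcard
    exact Nat.eq_of_mul_eq_mul_right two_pos hcard
  · rw [card_setOf_mem_ker_isConj_mul_eq_one hker_eq hsplit, hker_card] at hcard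
    omega

/-- Let `f : G̃ → G` be a surjective homomorphism of finite groups with kernel `{1, z}`,
where `z ≠ 1` is central in `G̃`.  For every `x̃ ∈ G̃`: if `x̃` is conjugate to `z·x̃`
(non-split), then `|C_{G̃}(x̃)| = |C_G(f(x̃))|`; if `x̃` is not conjugate to `z·x̃`
(split), then `|C_{G̃}(x̃)| = 2·|C_G(f(x̃))|`. -/
theorem centralizer_card_of_double_cover (G' G : Type) [Group G'] [Group G]
    [Finite G'] [Finite G] (f : G' →* G) (hf : Function.Surjective f)
    (z : G') (hz1 : z ≠ 1) (hzc : z ∈ Subgroup.center G')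
    (hker : ∀ y : G', f y = 1 ↔ y = 1 ∨ y = z) (x : G') :
    (IsConj x (z * x) →
      Nat.card (Subgroup.centralizer {x} : Subgroup G') =
        Nat.card (Subgroup.centralizer {f x} : Subgroup G)) ∧
    (¬ IsConj x (z * x) →
      Nat.card (Subgroup.centralizer {x} : Subgroup G') =
        2 * Nat.card (Subgroup.centralizer {f x} : Subgroup G)) :=
  centralizer_card_of_double_cover_general G' G f hf z hz1 hzc hker x
end

section
/- Let G be a finite group, z a central element of G of order 2, and χ the character of an irreducible finite-dimensional complex representation of G satisfying χ(z·x) = −χ(x) for all x ∈ G. Let S ⊆ G be a set of split elements (elements x not conjugate to z·x) such that every split element of G is conjugate to exactly one element of the set {s, z·s : s ∈ S}, and distinct elements of S are not conjugate nor conjugate after multiplication by z. Then Σ_{x ∈ S} |χ(x)|² / |C_G(x)| = 1/2. -/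
/-!
Orthogonality gives `∑ g, |χ g|² = |G|`. A non-split `x` has `χ x = χ (z x) = -χ x`, so `χ`
vanishes off the split elements, and these are partitioned into the conjugacy classes of the
elements of `S ∪ z S`, the class of `y` having `|G| / |C_G(y)|` elements. Multiplication by the
central `z` preserves `|χ|²` and centralizers, so the classes of `s` and `z s` contribute equally:
`2 |G| ∑_{s ∈ S} |χ s|² / |C_G(s)| = |G|`.
-/

open CategoryTheory Module Finset

lemma isNilpotent_pow_sub_algebraMap_pow {K A : Type*} [CommRing K] [Ring A] [Algebra K A]
    {a : A} {μ : K} (h : IsNilpotent (a - algebraMap K A μ)) (k : ℕ) :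
    IsNilpotent (a ^ k - algebraMap K A (μ ^ k)) := by
  set c := algebraMap K A μ
  have hcomm : Commute a c := Algebra.commute_algebraMap_right μ a
  have hsub_a : Commute (a - c) a := (Commute.refl a).sub_left hcomm.symm
  have hsub_c : Commute (a - c) c := hcomm.sub_left (Commute.refl c)
  rw [map_pow, ← hcomm.mul_geom_sum₂ k]
  exact Commute.isNilpotent_mul_right
    (Commute.sum_right _ _ _ fun i _ => (hsub_a.pow_right i).mul_right (hsub_c.pow_right _)) h

namespace Module.End

section Field

variable {K V : Type*} [Field K] [AddCommGroup V] [Module K V]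

lemma pow_eq_one_of_hasEigenvalue {f : End K V} {n : ℕ} (hf : f ^ n = 1) {μ : K}
    (hμ : f.HasEigenvalue μ) : μ ^ n = 1 := by
  obtain ⟨v, hv⟩ := hμ.exists_hasEigenvector
  have := hv.pow_apply n
  rw [hf, one_apply] at this
  exact smul_left_injective K hv.2 (by simpa using this.symm)

section FiniteDimensional

variable [FiniteDimensional K V]

lemma trace_eq_mul_finrank_of_isNilpotent_sub {f : End K V} (μ : K)
    (h : IsNilpotent (f - algebraMap K _ μ)) : LinearMap.trace K V f = μ * finrank K V := by
  have := LinearMap.trace_comp_eq_mul_of_commute_of_isNilpotent μ (Commute.one_left f) h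
  rwa [one_eq_id, LinearMap.id_comp, LinearMap.trace_id] at this

lemma trace_pow_eq_finsum [IsAlgClosed K] (f : End K V) (k : ℕ) :
    LinearMap.trace K V (f ^ k) = ∑ᶠ μ, μ ^ k * finrank K (f.maxGenEigenspace μ) := by
  classical
  have hds : DirectSum.IsInternal f.maxGenEigenspace :=
    DirectSum.isInternal_submodule_of_iSupIndep_of_iSup_eq_top
      f.independent_maxGenEigenspace f.iSup_maxGenEigenspace_eq_top
  have hfin : {μ | f.maxGenEigenspace μ ≠ ⊥}.Finite :=
    WellFoundedGT.finite_ne_bot_of_iSupIndep f.independent_maxGenEigenspace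
  rw [LinearMap.trace_eq_sum_trace_restrict' hds hfin
      fun μ => f.mapsTo_maxGenEigenspace_of_comm (Commute.pow_right rfl k) μ,
    finsum_eq_sum_of_support_subset _ (s := hfin.toFinset)
      fun μ hμ => hfin.mem_toFinset.mpr fun h => hμ (by simp [Submodule.finrank_eq_zero.mpr h])]
  refine Finset.sum_congr rfl fun μ _ => ?_
  rw [← pow_restrict _ (f.mapsTo_maxGenEigenspace_of_comm rfl μ)]
  exact trace_eq_mul_finrank_of_isNilpotent_sub _ <| isNilpotent_pow_sub_algebraMap_pow
    (f.isNilpotent_restrict_maxGenEigenspace_sub_algebraMap μ) k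

end FiniteDimensional

end Field

section Complex

variable {V : Type*} [AddCommGroup V] [Module ℂ V] [FiniteDimensional ℂ V]

-- The eigenvalues of `f` are `n`-th roots of unity, so `μ ^ (n - 1) = μ⁻¹ = conj μ`.
lemma trace_pow_pred_eq_conj_trace (f : End ℂ V) {n : ℕ} (hn : n ≠ 0) (hf : f ^ n = 1) :
    LinearMap.trace ℂ V (f ^ (n - 1)) = starRingEnd ℂ (LinearMap.trace ℂ V f) := by
  have hfin :
      (Function.support fun μ : ℂ => μ * (finrank ℂ (f.maxGenEigenspace μ) : ℂ)).Finite :=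
    (WellFoundedGT.finite_ne_bot_of_iSupIndep f.independent_maxGenEigenspace).subset
      fun μ hμ h => hμ (by simp [Submodule.finrank_eq_zero.mpr h])
  have htrace := trace_pow_eq_finsum f 1
  simp only [pow_one] at htrace
  rw [trace_pow_eq_finsum, htrace, map_finsum _ hfin]
  refine finsum_congr fun μ => ?_
  by_cases hμ : f.maxGenEigenspace μ = ⊥
  · simp [hμ]
  have hμn : μ ^ n = 1 := pow_eq_one_of_hasEigenvalue hf
    ((hasUnifEigenvalue_iff_hasUnifEigenvalue_one (by simp)).mp hμ)
  rw [map_mul, map_natCast, ← RCLike.inv_eq_conj (Complex.norm_eq_one_of_pow_eq_one hμn hn)]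
  have hμ0 : μ ≠ 0 := ne_zero_pow hn (hμn ▸ one_ne_zero)
  rw [pow_sub₀ μ hμ0 (Nat.one_le_iff_ne_zero.mpr hn), hμn, pow_one, one_mul]

end Complex

end Module.End

namespace FDRep

variable {G : Type*} [Group G]

lemma char_eq_of_isConj {k : Type*} [Field k] (V : FDRep k G) {a b : G} (h : IsConj a b) :
    V.character a = V.character b := by
  obtain ⟨c, rfl⟩ := isConj_iff.mp h
  exact (V.char_conj a c).symm

lemma char_inv_eq_conj [Finite G] (V : FDRep ℂ G) (g : G) :
    V.character g⁻¹ = starRingEnd ℂ (V.character g) := by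
  have hn : orderOf g ≠ 0 := (isOfFinOrder_of_finite g).orderOf_pos.ne'
  have hinv : g⁻¹ = g ^ (orderOf g - 1) := inv_eq_of_mul_eq_one_right <| by
    rw [← pow_succ', Nat.sub_add_cancel (Nat.one_le_iff_ne_zero.mpr hn), pow_orderOf_eq_one]
  rw [character, character, hinv, map_pow]
  exact Module.End.trace_pow_pred_eq_conj_trace (V.ρ g) hn <| by
    rw [← map_pow, pow_orderOf_eq_one, map_one]

lemma sum_char_mul_conj_char [Fintype G] (V : FDRep ℂ G) [Simple V] :
    ∑ g, V.character g * starRingEnd ℂ (V.character g) = Nat.card G := by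
  have hG : (Nat.card G : ℂ) ≠ 0 := Nat.cast_ne_zero.mpr Nat.card_pos.ne'
  have := invertibleOfNonzero hG
  have h := char_orthonormal V V
  rw [if_pos ⟨Iso.refl V⟩, inv_mul_eq_one₀ hG] at h
  simpa only [char_inv_eq_conj] using h.symm

end FDRep

section Center

variable {G : Type*} [Group G] {z : G}

lemma isConj_mul_left_iff_of_mem_center (hz : z ∈ Subgroup.center G) {a b : G} :
    IsConj (z * a) (z * b) ↔ IsConj a b := by
  have hconj (c : G) : c * (z * a) * c⁻¹ = z * (c * a * c⁻¹) := by
    rw [← mul_assoc, Subgroup.mem_center_iff.mp hz c]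
    simp only [mul_assoc]
  simp only [isConj_iff, hconj, mul_right_inj]

lemma centralizer_mul_left_of_mem_center (hz : z ∈ Subgroup.center G) (a : G) :
    Subgroup.centralizer {z * a} = Subgroup.centralizer {a} := by
  ext g
  simp only [Subgroup.mem_centralizer_singleton_iff]
  rw [← mul_assoc, Subgroup.mem_center_iff.mp hz g, mul_assoc, mul_assoc, mul_right_inj]

end Center

section ConjClasses

variable {G : Type*} [Group G] [Fintype G] [DecidableEq G]

lemma card_isConj_mul_card_centralizer (y : G) :
    #{x | IsConj x y} * Nat.card (Subgroup.centralizer {y}) = Nat.card G := by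
  have horbit : MulAction.orbit (ConjAct G) y = ↑({x | IsConj x y} : Finset G) := by
    ext x
    simp [ConjAct.mem_orbit_conjAct]
  rw [Subgroup.nat_card_centralizer_nat_card_stabilizer, ← Set.ncard_coe_finset, ← horbit,
    ← MulAction.index_stabilizer, Subgroup.index_mul_card]
  rfl

lemma sum_isConj_eq_card_mul_div {K : Type*} [Field K] [CharZero K] {F : G → K}
    (hF : ∀ a b, IsConj a b → F a = F b) (y : G) :
    ∑ x with IsConj x y, F x = Nat.card G * (F y / Nat.card (Subgroup.centralizer {y})) := by
  have hC : (Nat.card (Subgroup.centralizer {y}) : K) ≠ 0 := Nat.cast_ne_zero.mpr Nat.card_pos.ne'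
  rw [sum_congr rfl fun x hx => hF x y (mem_filter.mp hx).2, sum_const, nsmul_eq_mul,
    ← card_isConj_mul_card_centralizer y, Nat.cast_mul, mul_assoc, mul_div_cancel₀ _ hC]

lemma sum_eq_sum_sum_isConj {M : Type*} [AddCommMonoid M] {T : Finset G}
    (hT : (T : Set G).Pairwise fun a b => ¬IsConj a b) {F : G → M}
    (hF : ∀ x, (∀ y ∈ T, ¬IsConj x y) → F x = 0) :
    ∑ x, F x = ∑ y ∈ T, ∑ x with IsConj x y, F x := by
  rw [← sum_biUnion fun a ha b hb hab => disjoint_filter.mpr fun x _ hxa hxb =>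
    hT ha hb hab (hxa.symm.trans hxb)]
  exact (sum_subset (subset_univ _) fun x _ hx =>
    hF x fun y hy hxy =>
      hx (mem_biUnion.mpr ⟨y, hy, mem_filter.mpr ⟨mem_univ x, hxy⟩⟩)).symm

end ConjClasses

section SplitClasses

variable {G : Type*} [Group G] [Fintype G] [DecidableEq G] {z : G} {S : Finset G}

lemma sum_eq_two_mul_card_mul_sum_div_card_centralizer {K : Type*} [Field K] [CharZero K]
    (hz : z ∈ Subgroup.center G) {F : G → K} (hF_class : ∀ a b, IsConj a b → F a = F b)
    (hF_mul : ∀ x, F (z * x) = F x) (hF_vanish : ∀ x, IsConj x (z * x) → F x = 0)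
    (hS : ∀ s ∈ S, ¬IsConj s (z * s))
    (hcover : ∀ x, ¬IsConj x (z * x) →
      ∃! y, (y ∈ S ∨ ∃ s ∈ S, y = z * s) ∧ IsConj x y)
    (hdisj : Disjoint S (S.image (z * ·))) :
    ∑ x, F x = 2 * (Nat.card G * ∑ s ∈ S, F s / Nat.card (Subgroup.centralizer {s})) := by
  set T := S ∪ S.image (z * ·)
  have hT_iff {y : G} : y ∈ T ↔ y ∈ S ∨ ∃ s ∈ S, y = z * s := by
    simp only [T, mem_union, mem_image]
    exact or_congr_right
      ⟨fun ⟨s, hs, h⟩ => ⟨s, hs, h.symm⟩, fun ⟨s, hs, h⟩ => ⟨s, hs, h.symm⟩⟩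
  have hT_split : ∀ y ∈ T, ¬IsConj y (z * y) := by
    intro y hy
    obtain hy | ⟨s, hs, rfl⟩ := hT_iff.mp hy
    · exact hS y hy
    · rw [isConj_mul_left_iff_of_mem_center hz]
      exact hS s hs
  have hT_pairwise : (T : Set G).Pairwise fun a b => ¬IsConj a b :=
    fun a ha b hb hab hconj => hab <| (hcover a (hT_split a ha)).unique
      ⟨hT_iff.mp ha, IsConj.refl a⟩ ⟨hT_iff.mp hb, hconj⟩
  have hF_vanish' : ∀ x, (∀ y ∈ T, ¬IsConj x y) → F x = 0 := by
    intro x hx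
    by_contra hFx
    obtain ⟨y, ⟨hy, hxy⟩, -⟩ := hcover x (hFx ∘ hF_vanish x)
    exact hx y (hT_iff.mpr hy) hxy
  rw [sum_eq_sum_sum_isConj hT_pairwise hF_vanish', sum_union hdisj,
    sum_image (mul_right_injective z).injOn]
  simp only [sum_isConj_eq_card_mul_div hF_class, centralizer_mul_left_of_mem_center hz, hF_mul,
    ← mul_sum, ← two_mul]

end SplitClasses

/-- Let `G` be a finite group, `z` a central element of order 2, and `χ` the character
of an irreducible finite-dimensional complex representation `V` with `χ(z·x) = -χ(x)`.
Let `S ⊆ G` consist of split elements (`x` not conjugate to `z·x`) such that every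
split element of `G` is conjugate to exactly one element of `{s, z·s : s ∈ S}`, and
distinct elements of `S` are neither conjugate nor conjugate after multiplication by
`z`.  Then `Σ_{x ∈ S} |χ(x)|² / |C_G(x)| = 1/2`. -/
theorem spin_character_split_sum (G : Type) [Group G] [Fintype G]
    (z : G) (hzc : z ∈ Subgroup.center G) (hz2 : orderOf z = 2)
    (V : FDRep ℂ G) [Simple V]
    (hspin : ∀ x : G, V.character (z * x) = - V.character x)
    (S : Finset G)
    (hS : ∀ s ∈ S, ¬ IsConj s (z * s))
    (hcover : ∀ x : G, ¬ IsConj x (z * x) →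
      ∃! y : G, (y ∈ S ∨ ∃ s ∈ S, y = z * s) ∧ IsConj x y)
    (hdistinct : ∀ s ∈ S, ∀ t ∈ S, s ≠ t → ¬ IsConj s t ∧ ¬ IsConj s (z * t)) :
    ∑ x ∈ S, V.character x * (starRingEnd ℂ) (V.character x) /
      (Nat.card (Subgroup.centralizer {x} : Subgroup G) : ℂ) = 1 / 2 := by
  classical
  have hdisj : Disjoint S (S.image (z * ·)) := by
    refine disjoint_right.mpr fun a ha haS => ?_
    obtain ⟨s, hs, rfl⟩ := mem_image.mp ha
    have hz1 : z ≠ 1 := by rintro rfl; simp at hz2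
    exact (hdistinct (z * s) haS s hs (by simpa using hz1)).2 (IsConj.refl _)
  have hχ_vanish (x : G) (hx : IsConj x (z * x)) : V.character x = 0 := by
    have h := V.char_eq_of_isConj hx
    rwa [hspin, eq_neg_iff_add_eq_zero, ← two_mul, mul_eq_zero, or_iff_right two_ne_zero] at h
  have hsum := V.sum_char_mul_conj_char
  rw [sum_eq_two_mul_card_mul_sum_div_card_centralizer hzc
    (fun a b h => by simp only [V.char_eq_of_isConj h])
    (fun x => by simp only [hspin, map_neg, neg_mul_neg])
    (fun x hx => by simp only [hχ_vanish x hx, zero_mul]) hS hcover hdisj] at hsum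
  have hG : (Nat.card G : ℂ) ≠ 0 := Nat.cast_ne_zero.mpr Nat.card_pos.ne'
  rw [eq_div_iff two_ne_zero]
  refine mul_left_cancel₀ hG ?_
  linear_combination hsum
end
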